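/- For every integer k ≥ 1, the star graph K_{1,k} satisfies avd(K_{1,k}) ≤ 2(k+1)/3, with equality if and only if k ∈ {1, 2}. -/

import Mathlib

open scoped Classical

/-- The family of all dominating sets of `G`, as a `Finset` of `Finset`s. -/
noncomputable def domSets {V : Type*} [Fintype V] (G : SimpleGraph V) :
    Finset (Finset V) :=
  Finset.univ.filter fun S => ∀ v ∉ S, ∃ u ∈ S, G.Adj u v

/-- The average order of a dominating set of `G`. -/
noncomputable def avd {V : Type*} [Fintype V] (G : SimpleGraph V) : ℚ :=
  (∑ S ∈ domSets G, (S.card : ℚ)) / ((domSets G).card : ℚ)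

/-- A leaf is a vertex of degree one. -/
noncomputable def IsLeaf {V : Type*} [Fintype V] (G : SimpleGraph V) (v : V) : Prop :=
  G.degree v = 1

/-- The set of leaf neighbors of `w` in `G`. -/
noncomputable def leafNbrSet {V : Type*} [Fintype V] (G : SimpleGraph V) (w : V) : Set V :=
  {v | G.Adj w v ∧ IsLeaf G v}

/-- A support vertex is a vertex adjacent to at least one leaf. -/
noncomputable def IsSupport {V : Type*} [Fintype V] (G : SimpleGraph V) (w : V) : Prop :=
  ∃ v, G.Adj w v ∧ IsLeaf G v

/-!
A dominating set of the star `K_{1,k}` either contains the centre, and is then arbitrary on the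
`k` leaves, or it is exactly the set of all leaves. Hence there are `2^k + 1` of them, of total
order `k + (k/2 + 1) 2^k`, and a direct computation gives
`2(k+1)/3 - avd(K_{1,k}) = (k-2)(2^k-2) / (6(2^k+1))`, which is nonnegative for `k ≥ 1` and
vanishes exactly for `k = 1, 2`.
-/

open Finset

theorem Finset.two_mul_sum_card_powerset {α : Type*} (s : Finset α) :
    2 * ∑ t ∈ s.powerset, (#t : ℚ) = #s * 2 ^ #s := by
  induction s using Finset.induction_on with
  | empty => simp
  | @insert a s ha ih =>
    have hcard : ∀ t ∈ s.powerset, (#(insert a t) : ℚ) = #t + 1 := fun t ht => by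
      rw [card_insert_of_notMem fun h => ha (mem_powerset.mp ht h), Nat.cast_succ]
    rw [sum_powerset_insert ha, sum_congr rfl hcard, sum_add_distrib, sum_const,
      card_powerset, card_insert_of_notMem ha, nsmul_eq_mul]
    push_cast
    linear_combination 2 * ih

namespace Star

variable {β : Type*} [Fintype β]

abbrev graph (β : Type*) : SimpleGraph (Unit ⊕ β) := completeBipartiteGraph Unit β

abbrev center : Unit ⊕ β := Sum.inl ()

noncomputable abbrev leaves (β : Type*) [Fintype β] : Finset (Unit ⊕ β) := univ.erase center

theorem card_leaves : #(leaves β) = Fintype.card β := by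
  simp [card_erase_of_mem]

theorem center_notMem_of_mem_powerset_leaves {t : Finset (Unit ⊕ β)}
    (ht : t ∈ (leaves β).powerset) : center ∉ t :=
  fun h => notMem_erase _ _ (mem_powerset.mp ht h)

theorem mem_domSets_iff [Nonempty β] {S : Finset (Unit ⊕ β)} :
    S ∈ domSets (graph β) ↔ center ∈ S ∨ S = leaves β := by
  simp only [domSets, mem_filter, mem_univ, true_and]
  constructor
  · intro hS
    refine or_iff_not_imp_left.mpr fun hc => ?_
    ext (_ | b)
    · simpa using hc
    · simp only [mem_erase, ne_eq, reduceCtorEq, not_false_eq_true, mem_univ, and_self,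
        iff_true]
      by_contra hb
      obtain ⟨_ | _, hu, hadj⟩ := hS _ hb
      · exact hc hu
      · simp at hadj
  · rintro (hc | rfl) v hv
    · refine ⟨center, hc, ?_⟩
      rcases v with _ | b
      · exact absurd hc hv
      · simp
    · obtain ⟨b⟩ := ‹Nonempty β›
      have hv : v = center := by simpa using hv
      exact ⟨Sum.inr b, by simp, by simp [hv]⟩

theorem domSets_eq [Nonempty β] :
    domSets (graph β) = insert (leaves β) ((leaves β).powerset.image (insert center)) := by
  ext S
  rw [mem_domSets_iff, mem_insert, mem_image, or_comm]
  refine or_congr_right ⟨fun hc => ⟨S.erase center, ?_, insert_erase hc⟩, ?_⟩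
  · exact erase_subset_erase _ (subset_univ S) |> mem_powerset.mpr
  · rintro ⟨t, -, rfl⟩
    exact mem_insert_self _ _

theorem insert_center_injOn : Set.InjOn (insert center) (↑(leaves β).powerset : Set (Finset (Unit ⊕ β))) :=
  fun s hs t ht hst => by
    rw [← erase_insert (center_notMem_of_mem_powerset_leaves hs),
      ← erase_insert (center_notMem_of_mem_powerset_leaves ht), hst]

theorem leaves_notMem_image_insert_center :
    leaves β ∉ (leaves β).powerset.image (insert center) := by
  rw [mem_image]
  rintro ⟨t, -, ht⟩
  exact notMem_erase center univ (ht ▸ mem_insert_self _ _)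

theorem card_domSets [Nonempty β] :
    (#(domSets (graph β)) : ℚ) = 2 ^ Fintype.card β + 1 := by
  rw [domSets_eq, card_insert_of_notMem leaves_notMem_image_insert_center,
    card_image_of_injOn insert_center_injOn, card_powerset, card_leaves]
  push_cast
  ring

theorem two_mul_sum_card_domSets [Nonempty β] :
    2 * ∑ S ∈ domSets (graph β), (#S : ℚ) =
      2 * Fintype.card β + (Fintype.card β + 2) * 2 ^ Fintype.card β := by
  have hcard : ∀ t ∈ (leaves β).powerset, (#(insert center t) : ℚ) = #t + 1 := fun t ht => by
    rw [card_insert_of_notMem (center_notMem_of_mem_powerset_leaves ht), Nat.cast_succ]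
  rw [domSets_eq, sum_insert leaves_notMem_image_insert_center,
    sum_image insert_center_injOn, sum_congr rfl hcard, sum_add_distrib, sum_const,
    card_powerset, nsmul_eq_mul, mul_add, mul_add, two_mul_sum_card_powerset, card_leaves]
  push_cast
  ring

theorem two_mul_add_one_div_three_sub_avd [Nonempty β] :
    2 * ((Fintype.card β : ℚ) + 1) / 3 - avd (graph β) =
      (Fintype.card β - 2) * (2 ^ Fintype.card β - 2) / (6 * (2 ^ Fintype.card β + 1)) := by
  have hsum := two_mul_sum_card_domSets (β := β)
  rw [avd, card_domSets]
  field_simp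
  linear_combination (-9 : ℚ) * hsum

end Star

theorem sub_two_mul_two_pow_sub_two_nonneg {k : ℕ} (hk : 1 ≤ k) :
    0 ≤ ((k : ℚ) - 2) * (2 ^ k - 2) := by
  rcases hk.eq_or_lt with rfl | hk
  · norm_num
  · have hk2 : (2 : ℚ) ≤ k := by exact_mod_cast hk
    have h4 : (4 : ℚ) ≤ 2 ^ k := by
      calc (4 : ℚ) = 2 ^ 2 := by norm_num
        _ ≤ 2 ^ k := pow_le_pow_right₀ one_le_two hk
    nlinarith

theorem sub_two_mul_two_pow_sub_two_eq_zero_iff {k : ℕ} :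
    ((k : ℚ) - 2) * (2 ^ k - 2) = 0 ↔ k = 1 ∨ k = 2 := by
  rw [mul_eq_zero, sub_eq_zero, sub_eq_zero, or_comm]
  refine or_congr ?_ (by norm_cast)
  simpa using pow_right_inj₀ (two_pos : (0 : ℚ) < 2) (by norm_num) (m := k) (n := 1)

/-- For every `k ≥ 1`, the star `K_{1,k}` satisfies `avd(K_{1,k}) ≤ 2(k+1)/3`, with
equality if and only if `k ∈ {1, 2}`. -/
theorem avd_star {k : ℕ} (hk : 1 ≤ k) :
    avd (completeBipartiteGraph Unit (Fin k)) ≤ 2 * ((k : ℚ) + 1) / 3 ∧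
      (avd (completeBipartiteGraph Unit (Fin k)) = 2 * ((k : ℚ) + 1) / 3 ↔
        k = 1 ∨ k = 2) := by
  have : Nonempty (Fin k) := Fin.pos_iff_nonempty.mp hk
  have hgap := Star.two_mul_add_one_div_three_sub_avd (β := Fin k)
  rw [Fintype.card_fin] at hgap
  have hden : (0 : ℚ) < 6 * (2 ^ k + 1) := by positivity
  constructor
  · have := div_nonneg (sub_two_mul_two_pow_sub_two_nonneg hk) hden.le
    linarith
  · rw [eq_comm, ← sub_eq_zero, hgap, div_eq_zero_iff, or_iff_left hden.ne',
      sub_two_mul_two_pow_sub_two_eq_zero_iff]
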